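/- arXiv:2106.08674 — 5 statements merged into one kernel-verified Lean document; each statement's English description precedes it below -/
import Mathlib

section
/- The function p ↦ ((1-p)/θ(p))·(1/√p - 1) - p/2 is strictly decreasing on (1/2, 1], where θ(p) = (1 + √(2p-1))/2. -/
theorem stmt_4 :
    StrictAntiOn
      (fun p : ℝ =>
        (1 - p) / ((1 + Real.sqrt (2*p - 1)) / 2) * (1 / Real.sqrt p - 1) - p / 2)
      (Set.Ioc (1/2 : ℝ) 1) := by
  intro x hx y hy hxy
  obtain ⟨hx1, hx2⟩ := hx
  obtain ⟨hy1, hy2⟩ := hy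
  have hx0 : (0:ℝ) < x := by linarith
  have hy0 : (0:ℝ) < y := by linarith
  have hsx : 0 < Real.sqrt x := Real.sqrt_pos.2 hx0
  have hsy : 0 < Real.sqrt y := Real.sqrt_pos.2 hy0
  have hsx1 : Real.sqrt x ≤ 1 := by
    rw [show (1:ℝ) = Real.sqrt 1 by simp]
    exact Real.sqrt_le_sqrt hx2
  have hsy1 : Real.sqrt y ≤ 1 := by
    rw [show (1:ℝ) = Real.sqrt 1 by simp]
    exact Real.sqrt_le_sqrt hy2
  have hinvx : (1:ℝ) ≤ 1 / Real.sqrt x := (one_le_one_div hsx hsx1)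
  have hinvy : (1:ℝ) ≤ 1 / Real.sqrt y := (one_le_one_div hsy hsy1)
  have hinv : 1 / Real.sqrt y ≤ 1 / Real.sqrt x :=
    one_div_le_one_div_of_le hsx (Real.sqrt_le_sqrt hxy.le)
  have hNy : 0 ≤ (1 - y) * (1 / Real.sqrt y - 1) := by nlinarith
  have hNle : (1 - y) * (1 / Real.sqrt y - 1) ≤ (1 - x) * (1 / Real.sqrt x - 1) :=
    mul_le_mul (by linarith) (by linarith) (by linarith) (by linarith)
  have hNx : 0 ≤ (1 - x) * (1 / Real.sqrt x - 1) := le_trans hNy hNle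
  have hθx : 0 < (1 + Real.sqrt (2*x - 1)) / 2 := by
    have := Real.sqrt_nonneg (2*x - 1); linarith
  have hθ : (1 + Real.sqrt (2*x - 1)) / 2 ≤ (1 + Real.sqrt (2*y - 1)) / 2 := by
    have := Real.sqrt_le_sqrt (show 2*x - 1 ≤ 2*y - 1 by linarith); linarith
  have key : (1 - y) * (1 / Real.sqrt y - 1) / ((1 + Real.sqrt (2*y - 1)) / 2)
      ≤ (1 - x) * (1 / Real.sqrt x - 1) / ((1 + Real.sqrt (2*x - 1)) / 2) :=
    div_le_div₀ hNx hNle hθx hθ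
  simp only
  rw [div_mul_eq_mul_div, div_mul_eq_mul_div]
  linarith
end

section
/- Let r ≥ 1 be a natural number and ε > 0. If x₁, ..., x_{2r+3} are nonnegative reals with each xᵢ ≤ 1/(r+1) - ε and ∑ᵢ xᵢ = 1, then ∑ᵢ xᵢ² ≤ (r+1)(1/(r+1) - ε)² + ((r+1)ε)². -/
/-!
Among nonnegative reals bounded by `M` with prescribed sum `q * M + ρ`, the sum of squares is
largest when `q` of them equal `M` and one equals `ρ`. Induct on the number of terms: a term
`x ≤ ρ` is absorbed into the remainder, since `x ^ 2 + (ρ - x) ^ 2 ≤ ρ ^ 2`; a term `x > ρ` takes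
the place of one copy of `M`, since `x ^ 2 + (M + ρ - x) ^ 2 ≤ M ^ 2 + ρ ^ 2` for `ρ < x ≤ M`.
The theorem is the case `M = 1/(r+1) - ε`, `q = r + 1`, `ρ = (r+1) ε`.
-/

theorem Finset.sum_sq_le_of_sum_eq_mul_add {ι : Type*} (s : Finset ι) {x : ι → ℝ} {M ρ : ℝ}
    {q : ℕ} (h0 : ∀ i ∈ s, 0 ≤ x i) (hM : ∀ i ∈ s, x i ≤ M) (hρ : 0 ≤ ρ)
    (hs : ∑ i ∈ s, x i = q * M + ρ) :
    ∑ i ∈ s, x i ^ 2 ≤ q * M ^ 2 + ρ ^ 2 := by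
  induction s using Finset.cons_induction generalizing q ρ with
  | empty =>
    rw [Finset.sum_empty]
    positivity
  | cons a s ha ih =>
    simp only [Finset.mem_cons, forall_eq_or_imp] at h0 hM
    obtain ⟨ha0, h0⟩ := h0
    obtain ⟨haM, hM⟩ := hM
    rw [Finset.sum_cons] at hs ⊢
    rcases le_or_gt (x a) ρ with hle | hlt
    · have hrest := ih (q := q) h0 hM (sub_nonneg.2 hle) (by linarith)
      nlinarith [mul_nonneg ha0 (sub_nonneg.2 hle)]
    · obtain _ | q := q
      · simp only [Nat.cast_zero, zero_mul, zero_add] at hs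
        linarith [Finset.sum_nonneg h0]
      have hrest := ih (ρ := M + ρ - x a) (q := q) h0 hM (by linarith)
        (by push_cast at hs; linarith)
      push_cast
      nlinarith [mul_nonneg (sub_nonneg.2 haM) (sub_nonneg.2 hlt.le)]

theorem stmt_8_general (r : ℕ) (ε : ℝ) (hε : 0 < ε)
    (x : Fin (2*r+3) → ℝ) (h0 : ∀ i, 0 ≤ x i)
    (hub : ∀ i, x i ≤ 1/(r+1) - ε) (hsum : ∑ i, x i = 1) :
    ∑ i, (x i)^2 ≤ (r+1) * (1/(r+1) - ε)^2 + ((r+1)*ε)^2 := by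
  have hsplit : ∑ i, x i = ((r + 1 : ℕ) : ℝ) * (1/(r+1) - ε) + (r+1)*ε := by
    rw [hsum]
    push_cast
    field_simp
    ring
  have h := Finset.univ.sum_sq_le_of_sum_eq_mul_add (fun i _ => h0 i) (fun i _ => hub i)
    (by positivity) hsplit
  exact_mod_cast h

theorem stmt_8 (r : ℕ) (hr : 1 ≤ r) (ε : ℝ) (hε : 0 < ε)
    (x : Fin (2*r+3) → ℝ) (h0 : ∀ i, 0 ≤ x i)
    (hub : ∀ i, x i ≤ 1/(r+1) - ε) (hsum : ∑ i, x i = 1) :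
    ∑ i, (x i)^2 ≤ (r+1) * (1/(r+1) - ε)^2 + ((r+1)*ε)^2 :=
  stmt_8_general r ε hε x h0 hub hsum
end

section
/- For p > 4 - 2√3 with p ≤ 1, there is no 3×3 matrix A with nonnegative real entries satisfying: (1) A₁₁ + A₂₂ + p ≤ ∑_{i,j} A_{ij} ≤ 1; (2) A_{1j} ≥ (1/2)∑ᵢ A_{ij} for all j and A_{i1} ≥ (1/2)∑ⱼ A_{ij} for all i; (3) A_{1j}² + A_{2j}² ≥ p(∑ᵢ A_{ij})² for all j; (4) A_{i1}² + A_{i2}² ≥ p(∑ⱼ A_{ij})² for all i. -/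
private lemma le_of_sq_le' (x y : ℝ) (hx : 0 ≤ x) (hy : 0 ≤ y) (h : x^2 ≤ y^2) : x ≤ y := by
  nlinarith

private lemma lt_of_sq_lt' (x y : ℝ) (hx : 0 ≤ x) (hy : 0 ≤ y) (h : x^2 < y^2) : x < y := by
  nlinarith

private lemma pos_of_pos_mul' (x y : ℝ) (hx : 0 < x) (h : 0 < x * y) : 0 < y := by
  by_contra hy
  push_neg at hy
  nlinarith

/-- From the half-domination and the quadratic constraint, the top entry is at
least `(1+q)/2` times the column sum. -/
private lemma aux_beta (q x y z : ℝ) (hq0 : 0 ≤ q) (hy : 0 ≤ y) (hz : 0 ≤ z)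
    (hhalf : x ≥ (1/2) * (x + y + z))
    (hquad : x^2 + y^2 ≥ ((1+q^2)/2) * (x+y+z)^2) :
    (1+q) * (x+y+z) ≤ 2*x := by
  have hc : 0 ≤ x + y + z := by linarith
  have hkey : (2*x - (1+q)*(x+y+z)) * (2*x - (1-q)*(x+y+z)) ≥ 0 := by
    nlinarith [hquad, mul_nonneg hz (by linarith : (0:ℝ) ≤ 2*y + z)]
  nlinarith [hkey, hhalf, mul_nonneg hq0 hc, mul_nonneg (mul_nonneg hq0 hq0) (mul_nonneg hc hc)]

/-- Key scalar bound. -/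
private lemma aux_main (q s a b e : ℝ) (hq0 : 0 ≤ q) (hq1 : q ≤ 1) (hr : q^2 - 4*q + 1 < 0)
    (hs : 0 < s) (hs2 : 2*s^2 = 1 + q^2) (ha : 0 < a) (hb : 0 ≤ b) (he : 0 ≤ e)
    (hba : (1+q)*(b+e) ≤ (1-q)*a)
    (hquad : a^2 + b^2 ≥ ((1+q^2)/2) * (a+b+e)^2) :
    2*(1-q^2)*((1+q)*b + 2*e) < (1+q^2)*(1+q)*a := by
  have h1q : (0:ℝ) < 1 + q := by linarith
  have hD : (0:ℝ) < 2*s + 1 + q := by linarith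
  have hqb : (1+q)*b ≤ (1-q)*a := by
    have h := mul_nonneg h1q.le he
    linarith [h, hba]
  have key1 : s^2*(a+b+e)^2 ≤ a^2 + b^2 := by
    have hss : s^2 = (1+q^2)/2 := by linarith
    rw [hss]
    linarith
  have hprod : (0:ℝ) ≤ (2*s+1+q)*b*((1-q)*a - (1+q)*b) :=
    mul_nonneg (mul_nonneg hD.le hb) (by linarith)
  have keyeq : (a*(2*s+1+q)+(1-q)*b)^2
      = (a^2+b^2)*(2*s+1+q)^2 + 2*((2*s+1+q)*b*((1-q)*a - (1+q)*b)) := by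
    linear_combination (-2*b^2) * hs2
  have key2 : (a^2+b^2)*(2*s+1+q)^2 ≤ (a*(2*s+1+q)+(1-q)*b)^2 := by
    rw [keyeq]; linarith
  have habe : (0:ℝ) ≤ a + b + e := by linarith
  have hRnn : (0:ℝ) ≤ a*(2*s+1+q) + (1-q)*b := by
    have h1 := mul_nonneg ha.le hD.le
    have h2 := mul_nonneg (by linarith : (0:ℝ) ≤ 1-q) hb
    linarith
  have hsec : s*(a+b+e)*(2*s+1+q) ≤ a*(2*s+1+q) + (1-q)*b := by
    apply le_of_sq_le' _ _ (mul_nonneg (mul_nonneg hs.le habe) hD.le) hRnn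
    calc (s*(a+b+e)*(2*s+1+q))^2 = (s^2*(a+b+e)^2)*(2*s+1+q)^2 := by ring
      _ ≤ (a^2+b^2)*(2*s+1+q)^2 := mul_le_mul_of_nonneg_right key1 (sq_nonneg _)
      _ ≤ _ := key2
  have hpos : (0:ℝ) < (1+q)*s*(2*s+1+q) := by positivity
  have hsecs : (0:ℝ) ≤ a*(2*s+1+q)+(1-q)*b - s*(a+b+e)*(2*s+1+q) := by linarith
  have hq2le : (0:ℝ) ≤ 1 - q^2 := by nlinarith [hq0, hq1]
  have T1 : (0:ℝ) ≤ 4*(1-q^2)*(1+q)*(a*(2*s+1+q)+(1-q)*b - s*(a+b+e)*(2*s+1+q)) := by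
    have h := mul_nonneg (mul_nonneg (by linarith : (0:ℝ) ≤ 4*(1-q^2)) h1q.le) hsecs
    linarith [h]
  suffices hE : 0 < (1+q^2)*(1+q)*a - 2*(1-q^2)*((1+q)*b + 2*e) by linarith
  apply pos_of_pos_mul' ((1+q)*s*(2*s+1+q)) _ hpos
  rcases le_or_gt (1-q) s with hcs | hcs
  · -- case A : s ≥ 1 - q
    have hQ : (1+q^2)*(q^2-4*q+1) + 8*(q^2-1) < 0 := by
      have h := mul_neg_of_pos_of_neg (by positivity : (0:ℝ) < 1+q^2) hr
      linarith [h, hq2le]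
    have hrq := mul_pos_of_neg_of_neg hr hQ
    have hP : 32*(1-q)^2 < (1+q^2)*(q^2-4*q+5)^2 := by linarith [hrq]
    have h5 : (0:ℝ) < q^2-4*q+5 := by linarith [sq_nonneg (q-2)]
    have hy2 : (s*(q^2-4*q+5))^2 = (1+q^2)*(q^2-4*q+5)^2/2 := by
      linear_combination ((q^2-4*q+5)^2/2) * hs2
    have hsq5 : 4*(1-q) < s*(q^2-4*q+5) := by
      apply lt_of_sq_lt' _ _ (by linarith) (mul_pos hs h5).le
      rw [hy2]; linarith [hP]
    have hI : (0:ℝ) < (1+q^2)*s - 4*(1-q)*(1-s) := by linarith [hsq5]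
    have T2 : (0:ℝ) ≤ 2*(1-q^2)^2*(s-1+q)*((1+q)*b) := by
      have h1 : (0:ℝ) ≤ s - 1 + q := by linarith
      positivity
    have T3 : (0:ℝ) < a*(2*s+1+q)*(1+q)^2*((1+q^2)*s - 4*(1-q)*(1-s)) := by positivity
    have hid : (1+q)*s*(2*s+1+q)*((1+q^2)*(1+q)*a - 2*(1-q^2)*((1+q)*b+2*e))
        = 4*(1-q^2)*(1+q)*(a*(2*s+1+q)+(1-q)*b - s*(a+b+e)*(2*s+1+q))
          + 2*(1-q^2)^2*(s-1+q)*((1+q)*b)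
          + a*(2*s+1+q)*(1+q)^2*((1+q^2)*s - 4*(1-q)*(1-s)) := by
      linear_combination (2*b*(1-q^2)^2) * hs2
    rw [hid]; linarith
  · -- case B : s < 1 - q
    have T2 : (0:ℝ) ≤ 2*(1-q^2)^2*(1-q-s)*((1-q)*a - (1+q)*b) := by
      have h1 : (0:ℝ) ≤ 1 - q - s := by linarith
      have h2 : (0:ℝ) ≤ (1-q)*a - (1+q)*b := by linarith
      positivity
    have T3 : (0:ℝ) < a*(1+q)^2*(-(q^2-4*q+1))*((1+q^2)+s*(1+q)) := by
      have h1 : (0:ℝ) < -(q^2-4*q+1) := by linarith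
      have h2 : (0:ℝ) < (1+q^2)+s*(1+q) := by positivity
      positivity
    have hid : (1+q)*s*(2*s+1+q)*((1+q^2)*(1+q)*a - 2*(1-q^2)*((1+q)*b+2*e))
        = 4*(1-q^2)*(1+q)*(a*(2*s+1+q)+(1-q)*b - s*(a+b+e)*(2*s+1+q))
          + 2*(1-q^2)^2*(1-q-s)*((1-q)*a - (1+q)*b)
          + a*(1+q)^2*(-(q^2-4*q+1))*((1+q^2)+s*(1+q)) := by
      linear_combination (a*(5+6*q-2*q^2-2*q^3+q^4) + 2*b*(1-q^2)^2) * hs2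
    rw [hid]; linarith

set_option maxHeartbeats 800000 in
theorem stmt_9 (p : ℝ) (hp : 4 - 2 * Real.sqrt 3 < p) (hp1 : p ≤ 1)
    (A : Fin 3 → Fin 3 → ℝ) (hA : ∀ i j, 0 ≤ A i j)
    (h1a : A 0 0 + A 1 1 + p ≤ ∑ i, ∑ j, A i j)
    (h1b : ∑ i, ∑ j, A i j ≤ 1)
    (h2a : ∀ j, A 0 j ≥ (1/2) * ∑ i, A i j)
    (h2b : ∀ i, A i 0 ≥ (1/2) * ∑ j, A i j)
    (h3 : ∀ j, (A 0 j)^2 + (A 1 j)^2 ≥ p * (∑ i, A i j)^2)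
    (h4 : ∀ i, (A i 0)^2 + (A i 1)^2 ≥ p * (∑ j, A i j)^2) :
    False := by
  have h3s : Real.sqrt 3 ^ 2 = 3 := Real.sq_sqrt (by norm_num)
  have h3nn : (0:ℝ) ≤ Real.sqrt 3 := Real.sqrt_nonneg 3
  have h3lt : Real.sqrt 3 < 7/4 := by nlinarith
  have hp0 : (1:ℝ)/2 < p := by linarith
  set q := Real.sqrt (2*p - 1) with hqdef
  have hq0 : 0 ≤ q := Real.sqrt_nonneg _
  have hq2 : q^2 = 2*p - 1 := Real.sq_sqrt (by linarith)
  have hq1 : q ≤ 1 := by linarith [sq_nonneg (1-q), hq2]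
  have hr : q^2 - 4*q + 1 < 0 := by
    have h1 : (0:ℝ) ≤ 2 - Real.sqrt 3 := by linarith
    have h2 : (2 - Real.sqrt 3)^2 < q^2 := by linarith [hq2, h3s, hp]
    have h3' : 2 - Real.sqrt 3 < q := lt_of_sq_lt' _ _ h1 hq0 h2
    have h4' := mul_pos (by linarith : (0:ℝ) < Real.sqrt 3 - (2 - q))
      (by linarith : (0:ℝ) < Real.sqrt 3 + (2 - q))
    linarith [h4', h3s]
  set s := Real.sqrt p with hsdef
  have hs : 0 < s := Real.sqrt_pos.2 (by linarith)
  have hs2' : s^2 = p := Real.sq_sqrt (by linarith)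
  have hs2 : 2*s^2 = 1 + q^2 := by rw [hs2', hq2]; ring
  simp only [Fin.sum_univ_three] at h1a h1b
  have n00 := hA 0 0
  have n01 := hA 0 1
  have n02 := hA 0 2
  have n10 := hA 1 0
  have n11 := hA 1 1
  have n12 := hA 1 2
  have n20 := hA 2 0
  have n21 := hA 2 1
  have n22 := hA 2 2
  have hpq : ((1:ℝ)+q^2)/2 = p := by rw [hq2]; ring
  -- β-bounds
  have hrow0 : (1+q) * (A 0 0 + A 0 1 + A 0 2) ≤ 2 * A 0 0 := by
    have hh := h2b 0
    have hq4 := h4 0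
    simp only [Fin.sum_univ_three] at hh hq4
    exact aux_beta q (A 0 0) (A 0 1) (A 0 2) hq0 n01 n02 hh (by rw [hpq]; exact hq4)
  have hcol0 : (1+q) * (A 0 0 + A 1 0 + A 2 0) ≤ 2 * A 0 0 := by
    have hh := h2a 0
    have hq3 := h3 0
    simp only [Fin.sum_univ_three] at hh hq3
    exact aux_beta q (A 0 0) (A 1 0) (A 2 0) hq0 n10 n20 hh (by rw [hpq]; exact hq3)
  have hcol2 : (1+q) * (A 0 2 + A 1 2 + A 2 2) ≤ 2 * A 0 2 := by
    have hh := h2a 2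
    have hq3 := h3 2
    simp only [Fin.sum_univ_three] at hh hq3
    exact aux_beta q (A 0 2) (A 1 2) (A 2 2) hq0 n12 n22 hh (by rw [hpq]; exact hq3)
  have hrow2 : (1+q) * (A 2 0 + A 2 1 + A 2 2) ≤ 2 * A 2 0 := by
    have hh := h2b 2
    have hq4 := h4 2
    simp only [Fin.sum_univ_three] at hh hq4
    exact aux_beta q (A 2 0) (A 2 1) (A 2 2) hq0 n21 n22 hh (by rw [hpq]; exact hq4)
  -- positivity of A 0 0
  have hr0half : A 0 0 + A 0 1 + A 0 2 ≥ (1/2) * (A 0 0 + A 0 1 + A 0 2 + (A 1 0 + A 1 1 + A 1 2) + (A 2 0 + A 2 1 + A 2 2)) := by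
    have g0 := h2a 0
    have g1 := h2a 1
    have g2 := h2a 2
    simp only [Fin.sum_univ_three] at g0 g1 g2
    linarith
  have hh0 := h2b 0
  simp only [Fin.sum_univ_three] at hh0
  have ha : 0 < A 0 0 := by linarith
  -- mass constraints
  have hP2 : A 0 0 + p ≤ 1 := by linarith
  have hP1 : p ≤ A 0 1 + A 0 2 + A 1 0 + A 2 0 + A 1 2 + A 2 1 + A 2 2 := by linarith
  have h1q : (0:ℝ) < 1 + q := by linarith
  have hP1' : (1+q)*p ≤ ((1+q)*(A 0 1) + 2*(A 0 2)) + ((1+q)*(A 1 0) + 2*(A 2 0)) := by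
    have hh := mul_le_mul_of_nonneg_left hP1 h1q.le
    have hz := mul_nonneg hq0 n22
    linarith [hh, hz, hcol2, hrow2, n22]
  -- main scalar bounds
  have hba1 : (1+q)*(A 0 1 + A 0 2) ≤ (1-q)*(A 0 0) := by linarith
  have hba2 : (1+q)*(A 1 0 + A 2 0) ≤ (1-q)*(A 0 0) := by linarith
  have hq4 := h4 0
  have hq3 := h3 0
  simp only [Fin.sum_univ_three] at hq4 hq3
  have hm1 := aux_main q s (A 0 0) (A 0 1) (A 0 2) hq0 hq1 hr hs hs2 ha n01 n02 hba1
    (by rw [hpq]; exact hq4)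
  have hm2 := aux_main q s (A 0 0) (A 1 0) (A 2 0) hq0 hq1 hr hs hs2 ha n10 n20 hba2
    (by rw [hpq]; exact hq3)
  have hqq : (0:ℝ) ≤ 2*(1-q^2) := by linarith [hq2]
  have hfin : 2*(1-q^2)*((1+q)*p) < 2*((1+q^2)*(1+q)*(A 0 0)) := by
    have hh := mul_le_mul_of_nonneg_left hP1' hqq
    linarith [hh, hm1, hm2]
  have e1 : (1:ℝ)-q^2 = 2-2*p := by linarith [hq2]
  have e2 : (1:ℝ)+q^2 = 2*p := by linarith [hq2]
  rw [e1, e2] at hfin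
  have hx : (0:ℝ) < p*(1+q) := mul_pos (by linarith) h1q
  have hy := mul_le_mul_of_nonneg_left hP2 hx.le
  linarith [hfin, hy]
end

section
/- If G is a complete multipartite graph on 2n vertices whose independence number is at most n, then G contains at least n! perfect matchings. -/
/-!
Call a vertex set `s` of size `2m` balanced if every part meets it in at most `m` vertices.
If `s` is balanced of size `2m + 2` and `v` lies in a largest part, then `v` has at least
`m + 1` neighbours `u` in `s`, and deleting `v` and any such `u` leaves a balanced set: a part
other than `v`'s that still had `m + 1` vertices would, together with `v`'s part (at least as
large), exceed the `2m + 1` vertices of `s` other than `u`. Adding the edge `vu` to perfect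
matchings of the smaller sets gives distinct perfect matchings of `s` for distinct `u`, so by
induction a balanced set of size `2m` carries at least `m!` perfect matchings.
-/

open Finset
open scoped Nat

section Parts

variable {V ι : Type*} [DecidableEq ι] (f : V → ι)

lemma exists_mem_forall_card_filter_le {s : Finset V} (hs : s.Nonempty) :
    ∃ v ∈ s, ∀ i, #{x ∈ s | f x = i} ≤ #{x ∈ s | f x = f v} := by
  obtain ⟨v, hv, hmax⟩ := exists_max_image s (fun v => #{x ∈ s | f x = f v}) hs
  refine ⟨v, hv, fun i => ?_⟩
  rcases ({x ∈ s | f x = i} : Finset V).eq_empty_or_nonempty with hempty | ⟨w, hw⟩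
  · simp [hempty]
  · rw [mem_filter] at hw
    rw [← hw.2]
    exact hmax w hw.1

lemma card_filter_erase_erase_le [DecidableEq V] {s : Finset V} {m : ℕ} {u v : V}
    (hs : #s = 2 * m + 2) (hv : v ∈ s) (hvpart : #{x ∈ s | f x = f v} ≤ m + 1)
    (hmax : ∀ i, #{x ∈ s | f x = i} ≤ #{x ∈ s | f x = f v}) (hu : u ∈ s) (huv : f u ≠ f v)
    (i : ι) : #{x ∈ (s.erase v).erase u | f x = i} ≤ m := by
  have hsub : {x ∈ (s.erase v).erase u | f x = i} ⊆ {x ∈ s | f x = i} :=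
    filter_subset_filter _ ((erase_subset _ _).trans (erase_subset _ _))
  by_cases hi : i = f v
  · subst hi
    have : {x ∈ (s.erase v).erase u | f x = f v} ⊆ {x ∈ s | f x = f v}.erase v := by
      intro x hx
      simp only [mem_filter, mem_erase] at hx ⊢
      exact ⟨hx.1.2.1, hx.1.2.2, hx.2⟩
    have := card_le_card this
    rw [card_erase_of_mem (by simp [hv])] at this
    omega
  · -- The part `i` of the smaller set and the part of `v`, which is at least as large, are
    -- disjoint subsets of `s.erase u`, which has `2m + 1` elements.
    have hdisj : Disjoint {x ∈ (s.erase v).erase u | f x = i} {x ∈ s | f x = f v} := by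
      rw [disjoint_left]
      intro x hx hxv
      exact hi ((mem_filter.1 hx).2 ▸ (mem_filter.1 hxv).2)
    have hunion : {x ∈ (s.erase v).erase u | f x = i} ∪ {x ∈ s | f x = f v} ⊆ s.erase u := by
      intro x hx
      simp only [mem_union, mem_filter, mem_erase] at hx ⊢
      rcases hx with hx | hx
      · exact ⟨hx.1.1, hx.1.2.2⟩
      · exact ⟨fun h => huv (h ▸ hx.2), hx.1⟩
    have := card_le_card hunion
    rw [card_union_of_disjoint hdisj, card_erase_of_mem hu] at this
    have := (card_le_card hsub).trans (hmax i)
    omega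

end Parts

namespace SimpleGraph

variable {V : Type*} (G : SimpleGraph V)

def subgraphOfInvolution (g : V → V) : G.Subgraph where
  verts := Set.univ
  Adj a b := G.Adj a b ∧ g a = b ∧ g b = a
  adj_sub h := h.1
  edge_vert _ := trivial
  symm := ⟨fun _ _ h => ⟨h.1.symm, h.2.2, h.2.1⟩⟩

variable {G} in
lemma subgraphOfInvolution_adj {g : V → V} {a b : V} :
    (subgraphOfInvolution G g).Adj a b ↔ G.Adj a b ∧ g a = b ∧ g b = a :=
  Iff.rfl

variable [Fintype V] [DecidableEq V] [DecidableRel G.Adj]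

/-- Perfect matchings of `G.induce s`, each encoded by the involution swapping matched vertices,
extended by the identity outside `s`. -/
def matchingInvolutions (s : Finset V) : Finset (V → V) :=
  {g | (∀ x ∈ s, g x ∈ s ∧ g (g x) = x ∧ G.Adj x (g x)) ∧ ∀ x ∉ s, g x = x}

variable {G}

lemma mem_matchingInvolutions {s : Finset V} {g : V → V} :
    g ∈ G.matchingInvolutions s ↔
      (∀ x ∈ s, g x ∈ s ∧ g (g x) = x ∧ G.Adj x (g x)) ∧ ∀ x ∉ s, g x = x := by
  simp [matchingInvolutions]

lemma id_mem_matchingInvolutions_empty : id ∈ G.matchingInvolutions ∅ := by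
  simp [mem_matchingInvolutions]

lemma update_update_mem_matchingInvolutions {s : Finset V} {u v : V} {g : V → V}
    (hv : v ∈ s) (hu : u ∈ s) (hvu : G.Adj v u)
    (hg : g ∈ G.matchingInvolutions ((s.erase v).erase u)) :
    Function.update (Function.update g v u) u v ∈ G.matchingInvolutions s := by
  rw [mem_matchingInvolutions] at hg ⊢
  obtain ⟨hinv, hfix⟩ := hg
  have huv : u ≠ v := hvu.ne.symm
  refine ⟨fun x hx => ?_, fun x hx => ?_⟩
  · by_cases hxu : x = u
    · subst hxu; simp [Function.update_of_ne huv.symm, hv, hvu.symm]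
    by_cases hxv : x = v
    · subst hxv; simp [hvu.ne, hu, hvu]
    have hx' : x ∈ (s.erase v).erase u := by simp [hx, hxu, hxv]
    obtain ⟨hgx, hggx, hadj⟩ := hinv x hx'
    have hgxu : g x ≠ u := by rintro h; simp [h] at hgx
    have hgxv : g x ≠ v := by rintro h; simp [h] at hgx
    simp only [Function.update_of_ne hxu, Function.update_of_ne hxv, Function.update_of_ne hgxu,
      Function.update_of_ne hgxv]
    exact ⟨mem_of_mem_erase (mem_of_mem_erase hgx), hggx, hadj⟩
  · have hxu : x ≠ u := by rintro rfl; exact hx hu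
    have hxv : x ≠ v := by rintro rfl; exact hx hv
    simp only [Function.update_of_ne hxu, Function.update_of_ne hxv]
    exact hfix x (fun h => hx (mem_of_mem_erase (mem_of_mem_erase h)))

lemma sum_card_matchingInvolutions_erase_le {s : Finset V} {v : V} (hv : v ∈ s) :
    ∑ u ∈ s with G.Adj v u, #(G.matchingInvolutions ((s.erase v).erase u)) ≤
      #(G.matchingInvolutions s) := by
  rw [← card_sigma]
  refine card_le_card_of_injOn (fun p => Function.update (Function.update p.2 v p.1) p.1 v) ?_ ?_
  · rintro ⟨u, g⟩ hp
    simp only [coe_sigma, Set.mem_sigma_iff, coe_filter, Set.mem_ofPred_eq, mem_coe] at hp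
    exact update_update_mem_matchingInvolutions hv hp.1.1 hp.1.2 hp.2
  · rintro ⟨u₁, g₁⟩ h₁ ⟨u₂, g₂⟩ h₂ heq
    simp only [coe_sigma, Set.mem_sigma_iff, coe_filter, Set.mem_ofPred_eq, mem_coe,
      mem_matchingInvolutions] at h₁ h₂
    have hu : u₁ = u₂ := by
      simpa [Function.update_apply, h₁.1.2.ne, h₂.1.2.ne] using congrFun heq v
    subst hu
    congr 1
    funext x
    by_cases hxu : x = u₁
    · rw [hxu, h₁.2.2 u₁ (by simp), h₂.2.2 u₁ (by simp)]
    by_cases hxv : x = v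
    · rw [hxv, h₁.2.2 v (by simp), h₂.2.2 v (by simp)]
    simpa [Function.update_of_ne hxu, Function.update_of_ne hxv] using congrFun heq x

theorem factorial_le_card_matchingInvolutions {ι : Type*} [DecidableEq ι] (f : V → ι)
    (hG : ∀ x y, G.Adj x y ↔ f x ≠ f y) {m : ℕ} {s : Finset V} (hs : #s = 2 * m)
    (hparts : ∀ i, #{x ∈ s | f x = i} ≤ m) : m ! ≤ #(G.matchingInvolutions s) := by
  induction m generalizing s with
  | zero =>
    rw [card_eq_zero.1 hs]
    exact card_pos.2 ⟨id, id_mem_matchingInvolutions_empty⟩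
  | succ m ih =>
    obtain ⟨v, hv, hmax⟩ := exists_mem_forall_card_filter_le f (s := s) (card_pos.1 (by omega))
    have hnbrs : {u ∈ s | G.Adj v u} = {u ∈ s | ¬ f u = f v} := by
      ext u; simp [hG, eq_comm]
    have hcard_nbrs : m + 1 ≤ #{u ∈ s | G.Adj v u} := by
      have := card_filter_add_card_filter_not (s := s) (fun u => f u = f v)
      have := hparts (f v)
      rw [hnbrs]
      omega
    calc (m + 1)! = (m + 1) * m ! := Nat.factorial_succ m
      _ ≤ ∑ u ∈ s with G.Adj v u, m ! := by
          rw [sum_const, smul_eq_mul]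
          exact Nat.mul_le_mul_right _ hcard_nbrs
      _ ≤ ∑ u ∈ s with G.Adj v u, #(G.matchingInvolutions ((s.erase v).erase u)) := by
          refine sum_le_sum fun u hu => ?_
          obtain ⟨hus, hvu⟩ := mem_filter.1 hu
          have hus' : u ∈ s.erase v := mem_erase.2 ⟨hvu.ne.symm, hus⟩
          refine ih ?_ (card_filter_erase_erase_le f hs hv (hparts (f v)) hmax hus ?_)
          · rw [card_erase_of_mem hus', card_erase_of_mem hv]
            omega
          · exact fun h => (hG v u).1 hvu h.symm
      _ ≤ #(G.matchingInvolutions s) := sum_card_matchingInvolutions_erase_le hv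

variable (G) in
lemma card_matchingInvolutions_univ_le :
    #(G.matchingInvolutions univ) ≤ {M : G.Subgraph | M.IsPerfectMatching}.ncard := by
  rw [← Set.ncard_coe_finset]
  refine Set.ncard_le_ncard_of_injOn (subgraphOfInvolution G) ?_ ?_ (Set.toFinite _)
  · intro g hg
    obtain ⟨hinv, -⟩ := mem_matchingInvolutions.1 hg
    rw [Set.mem_ofPred_eq, Subgraph.isPerfectMatching_iff]
    intro a
    obtain ⟨-, hgga, hadj⟩ := hinv a (mem_univ a)
    exact ⟨g a, subgraphOfInvolution_adj.2 ⟨hadj, rfl, hgga⟩,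
      fun b hb => (subgraphOfInvolution_adj.1 hb).2.1.symm⟩
  · intro g₁ hg₁ g₂ _ heq
    funext a
    obtain ⟨-, hgga, hadj⟩ := (mem_matchingInvolutions.1 hg₁).1 a (mem_univ a)
    have : (subgraphOfInvolution G g₂).Adj a (g₁ a) :=
      heq ▸ subgraphOfInvolution_adj.2 ⟨hadj, rfl, hgga⟩
    exact (subgraphOfInvolution_adj.1 this).2.1.symm

end SimpleGraph

/-- A complete multipartite graph on `2n` vertices with independence number at most `n`
contains at least `n!` perfect matchings. -/
theorem stmt_10 (n : ℕ) (V : Type*) [Fintype V] (hV : Fintype.card V = 2 * n)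
    (G : SimpleGraph V) {ι : Type*} (f : V → ι)
    (hmultipartite : ∀ u v : V, G.Adj u v ↔ f u ≠ f v)
    (hindep : ∀ s : Finset V, (∀ u ∈ s, ∀ v ∈ s, ¬ G.Adj u v) → s.card ≤ n) :
    Nat.factorial n ≤ {M : G.Subgraph | M.IsPerfectMatching}.ncard := by
  classical
  have hparts (i : ι) : #{x ∈ univ | f x = i} ≤ n := by
    refine hindep _ fun u hu v hv => ?_
    simp only [mem_filter] at hu hv
    simp [hmultipartite, hu.2, hv.2]
  calc n ! ≤ #(G.matchingInvolutions univ) :=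
        SimpleGraph.factorial_le_card_matchingInvolutions f hmultipartite (by simpa using hV) hparts
    _ ≤ _ := SimpleGraph.card_matchingInvolutions_univ_le G
end

section
/- Let r ≥ 1 be a natural number and p ∈ (1/(r+1), 1/r]. If α is a real number with 1/(r+1) ≤ α ≤ 1/r and rα² + (1-rα)² ≥ p, then α ≥ (1 + √(((r+1)p - 1)/r))/(r+1). -/
theorem stmt_19 (r : ℕ) (hr : 1 ≤ r) (p : ℝ)
    (hp1 : 1/((r:ℝ)+1) < p) (hp2 : p ≤ 1/(r:ℝ))
    (α : ℝ) (hα1 : 1/((r:ℝ)+1) ≤ α) (hα2 : α ≤ 1/(r:ℝ))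
    (h : p ≤ r * α^2 + (1 - r*α)^2) :
    (1 + Real.sqrt (((r+1)*p - 1)/r)) / (r+1) ≤ α := by
  have hR : (1:ℝ) ≤ (r:ℝ) := by exact_mod_cast hr
  have hR0 : (0:ℝ) < (r:ℝ) := by linarith
  have hR1 : (0:ℝ) < (r:ℝ) + 1 := by linarith
  have hp1' : 1 < p * ((r:ℝ)+1) := by
    rw [div_lt_iff₀ hR1] at hp1; linarith
  have ht : 0 ≤ (((r:ℝ)+1)*p - 1)/(r:ℝ) := by
    apply div_nonneg _ hR0.le; nlinarith
  set s := Real.sqrt ((((r:ℝ)+1)*p - 1)/(r:ℝ)) with hs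
  have hs0 : 0 ≤ s := Real.sqrt_nonneg _
  have hs2 : s^2 = (((r:ℝ)+1)*p - 1)/(r:ℝ) := Real.sq_sqrt ht
  have hs2' : s^2 * (r:ℝ) = ((r:ℝ)+1)*p - 1 := by
    rw [hs2]; field_simp
  have hα1' : 1 ≤ α * ((r:ℝ)+1) := by
    rw [div_le_iff₀ hR1] at hα1; linarith
  rw [div_le_iff₀ hR1]
  have hx : s^2 ≤ (α*((r:ℝ)+1) - 1)^2 := by nlinarith [hs2', h]
  have hxnn : 0 ≤ α*((r:ℝ)+1) - 1 := by linarith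
  have := (abs_le_of_sq_le_sq' hx hxnn).2
  linarith
end
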